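/- arXiv:1401.0265 — 2 statements merged into one kernel-verified Lean document; each statement's English description precedes it below -/
import Mathlib

section
/- Let n ≥ 1 and for each 1 ≤ i ≤ n let p_i : (ℝ^{d_y})^{i-1} × ℝ^{d_y} → [0,∞) be jointly measurable, such that for each fixed y_{1:i-1} ∈ (ℝ^{d_y})^{i-1} the map y ↦ p_i(y_{1:i-1}, y) is an integrable probability density on ℝ^{d_y}. For ε > 0 define p_i^ε(y_i | y_{1:i-1}) := λ(B(y_i,ε))^{-1} ∫_{B(y_i,ε)} p_i(y_{1:i-1}, u) du. Then for Lebesgue-almost every (y_1, …, y_n) ∈ (ℝ^{d_y})^n, lim_{ε→0} ∏_{i=1}^n p_i^ε(y_i | y_{1:i-1}) = ∏_{i=1}^n p_i(y_{1:i-1}, y_i). -/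
/-!
The factor `p i y` does not depend on `y i`, so Lebesgue's differentiation theorem for the
density `p i y` gives convergence of its ball averages at `y i` for almost every value of the
`i`-th coordinate, the other coordinates being fixed. Fubini upgrades this to almost every `y`
once the set of good points is known to be measurable. Measurability is obtained by letting the
radius run through the rationals only, which loses nothing: by the scaling of Haar measure, the
average of `‖f - f x‖` over `ball x ε` is at most `2 ^ d` times its average over `ball x q`
whenever `ε ≤ q ≤ 2 ε`.
-/

open MeasureTheory Filter Metric Function Module

open scoped Topology ENNReal

theorem ae_pi_of_forall_ae_update {ι : Type*} [Fintype ι] [DecidableEq ι] {X : ι → Type*}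
    [∀ i, MeasurableSpace (X i)] (μ : ∀ i, Measure (X i)) [∀ i, SigmaFinite (μ i)]
    {s : Set (∀ i, X i)} (hs : MeasurableSet s) (i : ι)
    (h : ∀ x, ∀ᵐ t ∂μ i, update x i t ∈ s) :
    ∀ᵐ x ∂Measure.pi μ, x ∈ s := by
  have hslice : ∀ x, ∫⁻ t, sᶜ.indicator 1 (update x i t) ∂μ i = 0 := fun x =>
    (lintegral_eq_zero_iff ((measurable_one.indicator hs.compl).comp (measurable_update x))).2 <|
      by filter_upwards [h x] with t ht using by simp [ht]
  rcases isEmpty_or_nonempty (∀ i, X i) with hX | ⟨⟨x₀⟩⟩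
  · exact Eventually.of_forall isEmptyElim
  rw [ae_iff, ← Set.compl_def, ← lintegral_indicator_one hs.compl,
    lintegral_eq_lmarginal_univ x₀,
    lmarginal_erase' _ (measurable_one.indicator hs.compl) (Finset.mem_univ i)]
  simp [hslice, lmarginal]

theorem tendsto_nhdsGT_zero_of_tendsto_rat {φ : ℝ → ℝ≥0∞} {C : ℝ≥0∞} (hC : C ≠ ∞)
    (hφ : ∀ ε q, 0 < ε → ε ≤ q → q ≤ 2 * ε → φ ε ≤ C * φ q)
    (h : Tendsto (fun q : ℚ => φ q) (comap ((↑) : ℚ → ℝ) (𝓝[>] 0)) (𝓝 0)) :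
    Tendsto φ (𝓝[>] 0) (𝓝 0) := by
  have hC' : Tendsto (fun q : ℚ => C * φ q) (comap ((↑) : ℚ → ℝ) (𝓝[>] 0)) (𝓝 0) := by
    simpa only [mul_zero] using ENNReal.Tendsto.const_mul h (Or.inr hC)
  refine ENNReal.tendsto_nhds_zero.2 fun e he => ?_
  obtain ⟨δ, hδ, hδe⟩ := (nhdsGT_basis (0 : ℝ)).eventually_iff.1
    (eventually_comap.1 (ENNReal.tendsto_nhds_zero.1 hC' e he))
  filter_upwards [Ioo_mem_nhdsGT (half_pos hδ)] with ε hε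
  obtain ⟨q, hεq, hq⟩ := exists_rat_btwn (by linarith [hε.1] : ε < 2 * ε)
  exact (hφ ε q hε.1 hεq.le hq.le).trans
    (hδe ⟨hε.1.trans hεq, by linarith [hε.2]⟩ q rfl)

section

variable {E F : Type*} [NormedAddCommGroup E] [NormedSpace ℝ E] [FiniteDimensional ℝ E]
  [MeasurableSpace E] [BorelSpace E] (μ : Measure E) [μ.IsAddHaarMeasure]
  [NormedAddCommGroup F]

theorem ball_ae_eq_closedBall (x : E) {r : ℝ} (hr : r ≠ 0) :
    ball x r =ᵐ[μ] closedBall x r := by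
  refine ae_eq_set.2 ⟨?_, ?_⟩
  · simp [Set.sdiff_eq_empty.2 ball_subset_closedBall]
  · rw [closedBall_sdiff_ball]
    exact Measure.addHaar_sphere_of_ne_zero μ x hr

theorem ae_tendsto_setLAverage_ball_enorm_sub {f : E → F} (hf : LocallyIntegrable f μ) :
    ∀ᵐ x ∂μ, Tendsto (fun r => ⨍⁻ u in ball x r, ‖f u - f x‖ₑ ∂μ) (𝓝[>] 0) (𝓝 0) := by
  filter_upwards [(Besicovitch.vitaliFamily μ).ae_tendsto_lintegral_enorm_sub_div hf] with x hx
  refine (hx.comp (Besicovitch.tendsto_filterAt μ x)).congr' ?_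
  filter_upwards [self_mem_nhdsWithin] with r (hr : 0 < r)
  rw [comp_apply, setLAverage_congr (ball_ae_eq_closedBall μ x hr.ne'), setLAverage_eq]

theorem measure_ball_le_two_pow_mul (x : E) {ε q : ℝ} (hq : q ≤ 2 * ε) :
    μ (ball x q) ≤ 2 ^ finrank ℝ E * μ (ball x ε) := by
  calc μ (ball x q) ≤ μ (ball x (2 * ε)) := measure_mono (ball_subset_ball hq)
    _ = 2 ^ finrank ℝ E * μ (ball x ε) := by
      rw [Measure.addHaar_ball_mul_of_pos μ x two_pos, Measure.addHaar_ball_center,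
        ENNReal.ofReal_pow zero_le_two, ENNReal.ofReal_ofNat,
        Measure.addHaar_ball_center μ x]

theorem setLAverage_ball_le_two_pow_mul (f : E → ℝ≥0∞) (x : E) {ε q : ℝ} (hε : 0 < ε)
    (hεq : ε ≤ q) (hq : q ≤ 2 * ε) :
    ⨍⁻ u in ball x ε, f u ∂μ ≤ 2 ^ finrank ℝ E * ⨍⁻ u in ball x q, f u ∂μ := by
  have hq0 : μ (ball x q) ≠ 0 := (measure_ball_pos μ x (hε.trans_le hεq)).ne'
  rw [setLAverage_eq, setLAverage_eq]
  refine ENNReal.div_le_of_le_mul ?_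
  calc ∫⁻ u in ball x ε, f u ∂μ ≤ ∫⁻ u in ball x q, f u ∂μ :=
        lintegral_mono_set (ball_subset_ball hεq)
    _ = (∫⁻ u in ball x q, f u ∂μ) / μ (ball x q) * μ (ball x q) :=
      (ENNReal.div_mul_cancel hq0 measure_ball_lt_top.ne).symm
    _ ≤ (∫⁻ u in ball x q, f u ∂μ) / μ (ball x q) * (2 ^ finrank ℝ E * μ (ball x ε)) := by
      gcongr
      exact measure_ball_le_two_pow_mul μ x hq
    _ = _ := by ring

theorem Measurable.setLAverage_ball {α : Type*} [MeasurableSpace α] {c : α → E}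
    (hc : Measurable c) {f : α → E → ℝ≥0∞} (hf : Measurable (uncurry f)) (r : ℝ) :
    Measurable fun a => ⨍⁻ u in ball (c a) r, f a u ∂μ := by
  simp_rw [setLAverage_eq, Measure.addHaar_ball_center μ _ r,
    ← lintegral_indicator measurableSet_ball]
  refine Measurable.div_const (Measurable.lintegral_prod_right'
    (f := fun p : α × E => (ball (c p.1) r).indicator (f p.1) p.2) ?_) _
  have hball : MeasurableSet {p : α × E | p.2 ∈ ball (c p.1) r} :=
    measurableSet_lt (measurable_snd.dist (hc.comp measurable_fst)) measurable_const
  exact hf.ite hball measurable_const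

theorem ae_pi_tendsto_setLAverage_ball_enorm_sub {ι : Type*} [Fintype ι] [DecidableEq ι]
    [MeasurableSpace F] [BorelSpace F] [SecondCountableTopology F]
    {g : (ι → E) → E → F} (hg : Measurable (uncurry g))
    (hint : ∀ y, LocallyIntegrable (g y) μ) (i : ι) (hgi : ∀ y t, g (update y i t) = g y) :
    ∀ᵐ y ∂Measure.pi fun _ => μ,
      Tendsto (fun r => ⨍⁻ u in ball (y i) r, ‖g y u - g y (y i)‖ₑ ∂μ) (𝓝[>] 0) (𝓝 0) := by
  have hmeas : ∀ r : ℝ,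
      Measurable fun y : ι → E => ⨍⁻ u in ball (y i) r, ‖g y u - g y (y i)‖ₑ ∂μ :=
    (measurable_pi_apply i).setLAverage_ball μ <| (hg.sub <| hg.comp <|
      measurable_fst.prodMk ((measurable_pi_apply i).comp measurable_fst)).enorm
  have hS := measurableSet_tendsto (𝓝 0) (l := comap ((↑) : ℚ → ℝ) (𝓝[>] 0))
    fun q : ℚ => hmeas q
  have hslice : ∀ y, ∀ᵐ t ∂μ, update y i t ∈
      {y | Tendsto (fun q : ℚ => ⨍⁻ u in ball (y i) q, ‖g y u - g y (y i)‖ₑ ∂μ)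
        (comap ((↑) : ℚ → ℝ) (𝓝[>] 0)) (𝓝 0)} := fun y => by
    filter_upwards [ae_tendsto_setLAverage_ball_enorm_sub μ (hint y)] with t ht
    simp only [hgi, update_self]
    exact ht.comp tendsto_comap
  filter_upwards [ae_pi_of_forall_ae_update _ hS i hslice] with y hy
  exact tendsto_nhdsGT_zero_of_tendsto_rat (ENNReal.pow_ne_top ENNReal.ofNat_ne_top)
    (fun ε q hε hεq hq => setLAverage_ball_le_two_pow_mul μ _ _ hε hεq hq) hy

omit [BorelSpace E] in
theorem tendsto_setAverage_ball_of_tendsto_setLAverage_enorm_sub [NormedSpace ℝ F]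
    [CompleteSpace F] {f : E → F} (hf : LocallyIntegrable f μ) {x : E}
    (h : Tendsto (fun r => ⨍⁻ u in ball x r, ‖f u - f x‖ₑ ∂μ) (𝓝[>] 0) (𝓝 0)) :
    Tendsto (fun r => ⨍ u in ball x r, f u ∂μ) (𝓝[>] 0) (𝓝 (f x)) := by
  refine tendsto_iff_edist_tendsto_0.2 <| tendsto_of_tendsto_of_tendsto_of_le_of_le'
    tendsto_const_nhds h (Eventually.of_forall fun _ => zero_le) ?_
  filter_upwards [self_mem_nhdsWithin] with r (hr : 0 < r)
  have hpos := (measure_ball_pos μ x hr).ne'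
  have hfin : μ (ball x r) ≠ ∞ := measure_ball_lt_top.ne
  have hint : IntegrableOn f (ball x r) μ :=
    (hf.integrableOn_isCompact (isCompact_closedBall x r)).mono_set ball_subset_closedBall
  conv_lhs => rw [edist_eq_enorm_sub, ← setAverage_const hpos hfin (f x)]
  rw [setAverage_eq', setAverage_eq', ← integral_sub, setLAverage_eq']
  · exact enorm_integral_le_lintegral_enorm _
  · exact (integrable_inv_smul_measure hpos hfin).2 hint
  · exact (integrable_inv_smul_measure hpos hfin).2 (integrableOn_const hfin)

end

theorem abc_likelihood_pointwise_convergence_general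
    (dy n : ℕ)
    (p : Fin n → (Fin n → EuclideanSpace ℝ (Fin dy)) → EuclideanSpace ℝ (Fin dy) → ℝ)
    (hp_meas : ∀ i, Measurable (fun q :
        (Fin n → EuclideanSpace ℝ (Fin dy)) × EuclideanSpace ℝ (Fin dy) => p i q.1 q.2))
    (hp_int : ∀ i y, Integrable (p i y))
    (hp_past : ∀ (i : Fin n) y y' u, (∀ j : Fin n, j < i → y j = y' j) →
      p i y u = p i y' u) :
    ∀ᵐ y : Fin n → EuclideanSpace ℝ (Fin dy) ∂volume,
      Tendsto (fun ε : ℝ =>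
          ∏ i, ((volume (Metric.ball (y i) ε)).toReal⁻¹ *
            ∫ u in Metric.ball (y i) ε, p i y u))
        (𝓝[>] 0) (𝓝 (∏ i, p i y (y i))) := by
  have hp_update : ∀ i y t, p i (update y i t) = p i y := fun i y t =>
    funext fun u => hp_past i _ _ u fun j hj => update_of_ne hj.ne _ _
  have hfactor : ∀ i, ∀ᵐ y : Fin n → EuclideanSpace ℝ (Fin dy) ∂volume,
      Tendsto (fun ε => ⨍ u in ball (y i) ε, p i y u) (𝓝[>] 0) (𝓝 (p i y (y i))) := fun i => by
    filter_upwards [ae_pi_tendsto_setLAverage_ball_enorm_sub volume (hp_meas i)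
      (fun y => (hp_int i y).locallyIntegrable) i (hp_update i)] with y hy
    exact tendsto_setAverage_ball_of_tendsto_setLAverage_enorm_sub volume
      (hp_int i y).locallyIntegrable hy
  filter_upwards [ae_all_iff.2 hfactor] with y hy
  simpa only [setAverage_eq, smul_eq_mul, measureReal_def] using
    tendsto_finsetProd _ fun i _ => hy i

/-- pointwise a.e. convergence of the ABC likelihood. If each
`p_i(y_{1:i-1}, ·)` is a conditional probability density on `ℝ^{d_y}` (measurable jointly,
depending on the record only through the first `i−1` coordinates), and
`p_i^ε(y_i | y_{1:i-1}) := λ(B(y_i,ε))⁻¹ ∫_{B(y_i,ε)} p_i(y_{1:i-1}, u) du`, then for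
Lebesgue-a.e. `(y_1, …, y_n)` one has
`∏_i p_i^ε(y_i | y_{1:i-1}) → ∏_i p_i(y_{1:i-1}, y_i)` as `ε ↓ 0`. -/
theorem abc_likelihood_pointwise_convergence
    (dy n : ℕ) (hn : 1 ≤ n)
    (p : Fin n → (Fin n → EuclideanSpace ℝ (Fin dy)) → EuclideanSpace ℝ (Fin dy) → ℝ)
    (hp_meas : ∀ i, Measurable (fun q :
        (Fin n → EuclideanSpace ℝ (Fin dy)) × EuclideanSpace ℝ (Fin dy) => p i q.1 q.2))
    (hp_nonneg : ∀ i y u, 0 ≤ p i y u)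
    (hp_int : ∀ i y, Integrable (p i y))
    (hp_dens : ∀ i y, ∫ u, p i y u = 1)
    (hp_past : ∀ (i : Fin n) y y' u, (∀ j : Fin n, j < i → y j = y' j) →
      p i y u = p i y' u) :
    ∀ᵐ y : Fin n → EuclideanSpace ℝ (Fin dy) ∂volume,
      Tendsto (fun ε : ℝ =>
          ∏ i, ((volume (Metric.ball (y i) ε)).toReal⁻¹ *
            ∫ u in Metric.ball (y i) ε, p i y u))
        (𝓝[>] 0) (𝓝 (∏ i, p i y (y i))) :=
  abc_likelihood_pointwise_convergence_general dy n p hp_meas hp_int hp_past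
end

section
/- Let n ≥ 1, let N ≥ 2 be an integer, and let α_1, …, α_n ∈ (0,1]. Then Σ_{m_1 = N}^∞ ⋯ Σ_{m_n = N}^∞ ∏_{i=1}^n [ ((N−1)/(m_i−1)) · C(m_i−1, N−1) · α_i^N · (1−α_i)^{m_i−N} ] = ∏_{i=1}^n α_i, where C(a,b) denotes the binomial coefficient. Consequently, the extended target π̂^ε(θ, m_{1:n} | y_{1:n}) ∝ π(θ) ∏_{i=1}^n [ (N−1)/((m_i−1) λ(B(y_i,ε))) ] · ∏_{i=1}^n C(m_i−1, N−1) α_i(y_i,θ,ε)^N (1−α_i(y_i,θ,ε))^{m_i−N} has θ-marginal proportional to π(θ) ∏_{i=1}^n α_i(y_i,θ,ε)/λ(B(y_i,ε)), i.e. the ABC posterior π^ε(θ | y_{1:n}). -/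
/-!
Since `(N - 1) / (m - 1) * C(m - 1, N - 1) = C(m - 2, N - 2)`, the one-dimensional sum over
`m = k + N` is `a ^ N * ∑ₖ C(k + N - 2, N - 2) (1 - a) ^ k = a ^ N / a ^ (N - 1) = a`, by the
negative binomial series. Over `ℝ` every summable family is absolutely summable, so the `n`-fold
sum of products factors into the product of the one-dimensional sums.
-/

open MeasureTheory

theorem hasSum_fin_pi_prod {κ : Type*} {n : ℕ} {f : Fin n → κ → ℝ} {a : Fin n → ℝ}
    (h : ∀ i, HasSum (f i) (a i)) :
    HasSum (fun m : Fin n → κ => ∏ i, f i (m i)) (∏ i, a i) := by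
  induction n with
  | zero => simp
  | succ n ih =>
    set tail : (Fin n → κ) → ℝ := fun m => ∏ i : Fin n, f i.succ (m i)
    have htail : HasSum tail (∏ i : Fin n, a i.succ) := ih fun i => h i.succ
    have hprod := (h 0).mul htail <| summable_mul_of_summable_norm
      (summable_norm_iff.2 (h 0).summable) (summable_norm_iff.2 htail.summable)
    have hcons : (fun m : Fin (n + 1) → κ => ∏ i, f i (m i)) =
        (fun x => f 0 x.1 * tail x.2) ∘ (Fin.consEquiv fun _ => κ).symm :=
      funext fun m => Fin.prod_univ_succ fun i => f i (m i)
    rw [hcons, Fin.prod_univ_succ]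
    exact (Fin.consEquiv fun _ => κ).symm.hasSum_iff.2 hprod

noncomputable def negBinomTerm (N : ℕ) (a : ℝ) (m : ℕ) : ℝ :=
  if N ≤ m then
    ((N : ℝ) - 1) / ((m : ℝ) - 1) * ((m - 1).choose (N - 1) : ℝ) * a ^ N * (1 - a) ^ (m - N)
  else 0

theorem negBinomTerm_of_lt {N m : ℕ} (a : ℝ) (h : m < N) : negBinomTerm N a m = 0 :=
  if_neg h.not_ge

theorem prod_negBinomTerm {n : ℕ} (N : ℕ) (a : Fin n → ℝ) (m : Fin n → ℕ) :
    ∏ i, negBinomTerm N (a i) (m i) = if ∀ i, N ≤ m i then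
      ∏ i, ((N : ℝ) - 1) / ((m i : ℝ) - 1) * ((m i - 1).choose (N - 1) : ℝ) *
        a i ^ N * (1 - a i) ^ (m i - N)
    else 0 := by
  simp only [negBinomTerm, Fintype.prod_ite_zero]
  congr

theorem negBinomTerm_add_eq_choose_mul (a : ℝ) (s k : ℕ) :
    negBinomTerm (s + 2) a (k + (s + 2)) = (k + s).choose s * (1 - a) ^ k * a ^ (s + 2) := by
  have hchoose :
      ((k + s + 1 : ℕ) : ℝ) * (k + s).choose s = (k + s + 1).choose (s + 1) * (s + 1) := by
    exact_mod_cast Nat.add_one_mul_choose_eq (k + s) s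
  have hpos : (k : ℝ) + s + 1 ≠ 0 := by positivity
  rw [negBinomTerm, if_pos le_add_self, show k + (s + 2) - 1 = k + s + 1 by omega,
    show s + 2 - 1 = s + 1 by omega, Nat.add_sub_cancel]
  push_cast at hchoose ⊢
  rw [show (s : ℝ) + 2 - 1 = s + 1 by ring, show (k : ℝ) + (s + 2) - 1 = k + s + 1 by ring]
  field_simp
  linear_combination -(1 - a) ^ k * a ^ (s + 2) * hchoose

theorem hasSum_negBinomTerm {N : ℕ} (hN : 2 ≤ N) {a : ℝ} (ha : |1 - a| < 1) :
    HasSum (negBinomTerm N a) a := by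
  obtain ⟨s, rfl⟩ : ∃ s, N = s + 2 := ⟨N - 2, by omega⟩
  have ha0 : a ≠ 0 := by rintro rfl; simp at ha
  have hgeom :=
    (hasSum_choose_mul_geometric_of_norm_lt_one s (r := 1 - a) ha).mul_right (a ^ (s + 2))
  rw [sub_sub_cancel, one_div, show (a ^ (s + 1))⁻¹ * a ^ (s + 2) = a by field_simp; ring] at hgeom
  refine ((add_left_injective (s + 2)).hasSum_iff fun m hm => negBinomTerm_of_lt a ?_).1 ?_
  · by_contra! hle
    exact hm ⟨m - (s + 2), Nat.sub_add_cancel hle⟩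
  · simpa only [Function.comp_def, negBinomTerm_add_eq_choose_mul] using hgeom

theorem negBinom_target_marginal_general
    (n N : ℕ) (hN : 2 ≤ N)
    (α : Fin n → ℝ) (hα : ∀ i, α i ∈ Set.Ioc (0 : ℝ) 1)
    (d : ℕ) (ε : ℝ) (y : Fin n → EuclideanSpace ℝ (Fin d))
    (pri : ℝ) :
    ((∑' m : Fin n → ℕ, if ∀ i, N ≤ m i then
        ∏ i, ((((N : ℝ) - 1) / ((m i : ℝ) - 1)) * ((m i - 1).choose (N - 1) : ℝ) *
          α i ^ N * (1 - α i) ^ (m i - N))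
      else 0) = ∏ i, α i) ∧
    ((∑' m : Fin n → ℕ, if ∀ i, N ≤ m i then
        pri * (∏ i, ((N : ℝ) - 1) /
            (((m i : ℝ) - 1) * (volume (Metric.ball (y i) ε)).toReal)) *
          ∏ i, (((m i - 1).choose (N - 1) : ℝ) * α i ^ N * (1 - α i) ^ (m i - N))
      else 0)
      = pri * ∏ i, α i / (volume (Metric.ball (y i) ε)).toReal) := by
  have hsum : HasSum (fun m : Fin n → ℕ => if ∀ i, N ≤ m i then
      ∏ i, ((((N : ℝ) - 1) / ((m i : ℝ) - 1)) * ((m i - 1).choose (N - 1) : ℝ) *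
        α i ^ N * (1 - α i) ^ (m i - N)) else 0) (∏ i, α i) := by
    have hα' : ∀ i, |1 - α i| < 1 := fun i =>
      abs_lt.2 ⟨by linarith [(hα i).2], by linarith [(hα i).1]⟩
    simpa only [prod_negBinomTerm] using
      hasSum_fin_pi_prod fun i => hasSum_negBinomTerm hN (hα' i)
  refine ⟨hsum.tsum_eq, ?_⟩
  set v : Fin n → ℝ := fun i => (volume (Metric.ball (y i) ε)).toReal
  convert (hsum.mul_left (pri * ∏ i, (v i)⁻¹)).tsum_eq using 1
  · refine tsum_congr fun m => ?_
    split_ifs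
    · simp only [div_eq_mul_inv, mul_inv, Finset.prod_mul_distrib]
      ring
    · rw [mul_zero]
  · simp only [div_eq_mul_inv, Finset.prod_mul_distrib]
    ring

/-- the `n`-fold negative binomial unbiasedness identity
`Σ_{m_1,…,m_n ≥ N} ∏_i ((N−1)/(m_i−1)) C(m_i−1, N−1) α_i^N (1−α_i)^{m_i−N} = ∏_i α_i`,
and consequently the extended target
`π̂^ε(θ, m_{1:n}|y_{1:n}) ∝ π(θ) ∏_i (N−1)/((m_i−1) λ(B(y_i,ε))) ∏_i C(m_i−1,N−1) α_i^N (1−α_i)^{m_i−N}`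
of the MCMC kernel with a random number of trials has `θ`-marginal proportional to
`π(θ) ∏_i α_i / λ(B(y_i,ε))`, i.e. the ABC posterior. -/
theorem negBinom_target_marginal
    (n N : ℕ) (hn : 1 ≤ n) (hN : 2 ≤ N)
    (α : Fin n → ℝ) (hα : ∀ i, α i ∈ Set.Ioc (0 : ℝ) 1)
    (d : ℕ) (ε : ℝ) (hε : 0 < ε) (y : Fin n → EuclideanSpace ℝ (Fin d))
    (pri : ℝ) :
    ((∑' m : Fin n → ℕ, if ∀ i, N ≤ m i then
        ∏ i, ((((N : ℝ) - 1) / ((m i : ℝ) - 1)) * ((m i - 1).choose (N - 1) : ℝ) *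
          α i ^ N * (1 - α i) ^ (m i - N))
      else 0) = ∏ i, α i) ∧
    ((∑' m : Fin n → ℕ, if ∀ i, N ≤ m i then
        pri * (∏ i, ((N : ℝ) - 1) /
            (((m i : ℝ) - 1) * (volume (Metric.ball (y i) ε)).toReal)) *
          ∏ i, (((m i - 1).choose (N - 1) : ℝ) * α i ^ N * (1 - α i) ^ (m i - N))
      else 0)
      = pri * ∏ i, α i / (volume (Metric.ball (y i) ε)).toReal) :=
  negBinom_target_marginal_general n N hN α hα d ε y pri
end
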